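/- If (RG)^- is anticommutative and * ≠ Id on G, then for every x ∈ G with x^* = x there exists a nonzero α ∈ R such that αx ∈ (RG)^-. Specifically, α = 2 works when σ(x) = 1, and α = 1 - σ(x) works when σ(x) ≠ 1. -/

import Mathlib

/-!
Pick `g` with `g* ≠ g`. The element `u = g - σ(g) g*` is skew-symmetric, so anticommutativity
gives `2u² = 0`. The coefficient of `g g*` in `2u²` is `-2σ(g)` or `-4σ(g)` (according as `g`
and `g*` commute or not), so `4σ(g) = 0` and hence `4 = 0` in `R`. For a symmetric `x`,
`σ(x)² = σ(x x*) = 1`, so `σ*(αx) = σ(x)αx` equals `-αx` both for `α = 2` when `σ(x) = 1`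
(as `4 = 0`) and for `α = 1 - σ(x)`.
-/

open Finsupp

/-- The generalized oriented map σ* on the group ring RG. -/
noncomputable def sigmaStar {R : Type} [CommRing R] {G : Type} [Group G]
    (inv : G → G) (σ : G →* Rˣ) (α : MonoidAlgebra R G) : MonoidAlgebra R G :=
  MonoidAlgebra.ofCoeff (α.coeff.sum fun x a => Finsupp.single (inv x) ((σ x : R) * a))

/-- The set of skew-symmetric elements of RG under σ*. -/
def skewSet {R : Type} [CommRing R] {G : Type} [Group G]
    (inv : G → G) (σ : G →* Rˣ) : Set (MonoidAlgebra R G) :=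
  {α | sigmaStar inv σ α = -α}

theorem MonoidAlgebra.four_mul_eq_zero_of_add_mul_self_eq_zero {R G : Type*} [CommRing R]
    [CancelMonoid G] {g h : G} (hgh : g ≠ h) {s : R} {u : MonoidAlgebra R G}
    (hu : u = MonoidAlgebra.single g 1 - MonoidAlgebra.single h s) (h2u : u * u + u * u = 0) :
    4 * s = 0 := by
  classical
  subst hu
  have hcoeff := congrArg (fun z => z.coeff (g * h)) h2u
  have hgg : g * g ≠ g * h := fun e => hgh (mul_left_cancel e)
  have hhh : h * h ≠ g * h := fun e => hgh (mul_right_cancel e).symm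
  simp only [mul_sub, sub_mul, MonoidAlgebra.single_mul_single, MonoidAlgebra.coeff_add,
    MonoidAlgebra.coeff_sub, MonoidAlgebra.coeff_single, MonoidAlgebra.coeff_zero,
    Finsupp.add_apply, Finsupp.sub_apply, Finsupp.single_eq_of_ne' hgg,
    Finsupp.single_eq_of_ne' hhh, Finsupp.single_eq_same, Finsupp.coe_zero,
    Pi.zero_apply] at hcoeff
  by_cases hc : h * g = g * h
  · simp only [hc, Finsupp.single_eq_same] at hcoeff
    linear_combination -hcoeff
  · simp only [Finsupp.single_eq_of_ne' hc] at hcoeff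
    linear_combination -2 * hcoeff

section SkewElements

variable {R : Type} [CommRing R] {G : Type} [Group G] (inv : G → G) (σ : G →* Rˣ)

lemma sigmaStar_single (x : G) (a : R) :
    sigmaStar inv σ (MonoidAlgebra.single x a) =
      MonoidAlgebra.single (inv x) ((σ x : R) * a) := by
  rw [sigmaStar, MonoidAlgebra.coeff_single, Finsupp.sum_single_index (by simp),
    MonoidAlgebra.ofCoeff_single]

lemma sigmaStar_sub (α β : MonoidAlgebra R G) :
    sigmaStar inv σ (α - β) = sigmaStar inv σ α - sigmaStar inv σ β := by
  rw [sigmaStar, MonoidAlgebra.coeff_sub,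
    Finsupp.sum_sub_index fun _ _ _ => by rw [mul_sub, Finsupp.single_sub]]
  rfl

variable {inv σ}

lemma val_mul_val_inv_eq_one {g : G} (hg : g * inv g ∈ σ.ker) :
    (σ g : R) * σ (inv g) = 1 := by
  rw [← Units.val_mul, ← map_mul, MonoidHom.mem_ker.mp hg, Units.val_one]

lemma single_mem_skewSet {x : G} (hx : inv x = x) {a : R} (ha : (σ x : R) * a = -a) :
    MonoidAlgebra.single x a ∈ skewSet inv σ := by
  show sigmaStar inv σ _ = -_
  rw [sigmaStar_single, hx, ha, MonoidAlgebra.single_neg]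

lemma single_sub_single_inv_mem_skewSet {g : G} (hinv : inv (inv g) = g)
    (hg : g * inv g ∈ σ.ker) :
    MonoidAlgebra.single g 1 - MonoidAlgebra.single (inv g) (σ g : R) ∈ skewSet inv σ := by
  show sigmaStar inv σ _ = -_
  rw [sigmaStar_sub, sigmaStar_single, sigmaStar_single, hinv, mul_one,
    mul_comm (σ (inv g) : R), val_mul_val_inv_eq_one hg, neg_sub]

lemma four_eq_zero_of_anticomm (hinv : ∀ x : G, inv (inv x) = x) (hne : inv ≠ id)
    (hcompat : ∀ x : G, x * inv x ∈ σ.ker)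
    (hanti : ∀ α ∈ skewSet inv σ, ∀ β ∈ skewSet inv σ, α * β + β * α = 0) :
    (4 : R) = 0 := by
  obtain ⟨g, hg⟩ := Function.ne_iff.mp hne
  have hu := single_sub_single_inv_mem_skewSet (hinv g) (hcompat g)
  have h4 := MonoidAlgebra.four_mul_eq_zero_of_add_mul_self_eq_zero (Ne.symm hg) rfl
    (hanti _ hu _ hu)
  exact (Units.mul_left_eq_zero (σ g)).mp h4

end SkewElements

theorem stmt6_general {R : Type} [CommRing R] (hchar : ringChar R ≠ 2) {G : Type} [Group G]
    (inv : G → G)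
    (hinv : ∀ x : G, inv (inv x) = x) (hne : inv ≠ id) (σ : G →* Rˣ) (hnt : σ ≠ 1)
    (hcompat : ∀ x : G, x * inv x ∈ σ.ker)
    (hanti : ∀ α ∈ skewSet inv σ, ∀ β ∈ skewSet inv σ, α * β + β * α = 0) :
    ∀ x : G, inv x = x →
      ∃ α : R, α ≠ 0 ∧ (MonoidAlgebra.ofCoeff (Finsupp.single x α) : MonoidAlgebra R G) ∈ skewSet inv σ ∧
        ((σ x : R) = 1 → α = 2) ∧ ((σ x : R) ≠ 1 → α = 1 - (σ x : R)) := by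
  intro x hx
  have : Nontrivial R := by
    contrapose! hnt
    exact MonoidHom.ext fun _ => Subsingleton.elim _ _
  have h4 : (4 : R) = 0 := four_eq_zero_of_anticomm hinv hne hcompat hanti
  have hσx : (σ x : R) * σ x = 1 := by
    simpa only [hx] using val_mul_val_inv_eq_one (hcompat x)
  by_cases h1 : (σ x : R) = 1
  · refine ⟨2, Ring.two_ne_zero hchar, single_mem_skewSet hx ?_, fun _ => rfl, absurd h1⟩
    linear_combination (2 : R) * h1 + h4
  · refine ⟨1 - σ x, sub_ne_zero.mpr (Ne.symm h1), single_mem_skewSet hx ?_, (absurd · h1),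
      fun _ => rfl⟩
    linear_combination -hσx

theorem stmt6 {R : Type} [CommRing R] (hchar : ringChar R ≠ 2) {G : Type} [Group G]
    (inv : G → G) (hmul : ∀ x y : G, inv (x * y) = inv y * inv x)
    (hinv : ∀ x : G, inv (inv x) = x) (hne : inv ≠ id) (σ : G →* Rˣ) (hnt : σ ≠ 1)
    (hcompat : ∀ x : G, x * inv x ∈ σ.ker)
    (hanti : ∀ α ∈ skewSet inv σ, ∀ β ∈ skewSet inv σ, α * β + β * α = 0) :
    ∀ x : G, inv x = x →
      ∃ α : R, α ≠ 0 ∧ (MonoidAlgebra.ofCoeff (Finsupp.single x α) : MonoidAlgebra R G) ∈ skewSet inv σ ∧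
        ((σ x : R) = 1 → α = 2) ∧ ((σ x : R) ≠ 1 → α = 1 - (σ x : R)) :=
  stmt6_general hchar inv hinv hne σ hnt hcompat hanti
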